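/- For any integers n ≥ 0, m ≥ 1 and any prime p not dividing m, Σ_{k=1}^{p-1} (−m)^{p-1-k} B_{n+k} ≡ Σ_{k=0}^{n} S(n,k) (−1)^{m+k-1} D_{m+k-1} (mod p), where B_j are Bell numbers and D_j derangement numbers. -/

import Mathlib

open Polynomial Finset

/-- Stirling numbers of the second kind. -/
def stirling2 : ℕ → ℕ → ℕ
  | 0, 0 => 1
  | 0, _ + 1 => 0
  | _ + 1, 0 => 0
  | n + 1, k + 1 => (k + 1) * stirling2 n (k + 1) + stirling2 n k

/-- Signed Stirling numbers of the first kind. -/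
def stirling1 : ℕ → ℕ → ℤ
  | 0, 0 => 1
  | 0, _ + 1 => 0
  | n + 1, 0 => -(n : ℤ) * stirling1 n 0
  | n + 1, k + 1 => stirling1 n k - (n : ℤ) * stirling1 n (k + 1)

/-- The Bell polynomial `B_m(x) = ∑_{j=0}^m S(m,j) x^j` over `ℤ`. -/
noncomputable def bellPoly (m : ℕ) : Polynomial ℤ :=
  ∑ j ∈ range (m + 1), (stirling2 m j : ℤ) • X ^ j

/-- The derangement polynomial `D_m(x) = ∑_{j=0}^m C(m,j) j! (x-1)^{m-j}` over `ℤ`. -/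
noncomputable def derPoly (m : ℕ) : Polynomial ℤ :=
  ∑ j ∈ range (m + 1), ((m.choose j * j.factorial : ℕ) : ℤ) • (X - 1) ^ (m - j)

/-- The Bell numbers `B_m = ∑_j S(m,j)`. -/
def bell (m : ℕ) : ℕ := ∑ j ∈ range (m + 1), stirling2 m j


/-!
Let `L : 𝔽_p[X] → 𝔽_p` be the linear functional with `L(X^j) = B_j`. The Bell recurrence
says `L(X f) = L(f(X + 1))`, hence `L((X)_k f) = L(f(X + k))` for the falling factorial `(X)_k`, and
since `(X)_p = X^p - X` in `𝔽_p[X]` this gives `L(X^p - X) = 1`.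

With `Q_a = (X^p - X) / (X - a)`, the left side of the congruence is `L(X^n Q_{-m})`. Expanding
`X^n = ∑ S(n,k) (X)_k` and shifting turns it into `∑ S(n,k) L(Q_{-m-k})`. Finally
`L(Q_{a-1}) = L(X Q_a) = L(X^p - X) + a L(Q_a) = 1 + a L(Q_a)`, which is the derangement recurrence
for `L(Q_{-(N+1)}) = (-1)^N D_N`.
-/

theorem stirling2_eq_stirlingSecond : stirling2 = Nat.stirlingSecond := by
  funext n k
  induction n generalizing k with
  | zero => cases k <;> rfl
  | succ n ih => cases k <;> simp [stirling2, Nat.stirlingSecond_succ_succ, ih]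

theorem Nat.stirlingSecond_succ_succ_eq_sum_choose (n j : ℕ) :
    stirlingSecond (n + 1) (j + 1) = ∑ k ∈ range (n + 1), n.choose k * stirlingSecond k j := by
  induction n generalizing j with
  | zero => cases j <;> rfl
  | succ n ih =>
    have pascal : ∑ k ∈ range (n + 2), (n + 1).choose k * stirlingSecond k j =
        ∑ k ∈ range (n + 1), n.choose k * stirlingSecond (k + 1) j +
          ∑ k ∈ range (n + 1), n.choose k * stirlingSecond k j := by
      rw [sum_range_succ']
      simp only [Nat.choose_succ_succ, add_mul, sum_add_distrib]
      rw [add_assoc, sum_range_succ (fun k => n.choose (k + 1) * _) n, Nat.choose_succ_self,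
        zero_mul, add_zero, sum_range_succ' (fun k => n.choose k * stirlingSecond k j),
        Nat.choose_zero_right, Nat.choose_zero_right]
    rw [pascal, ← ih j]
    cases j with
    | zero => simp [stirlingSecond_one_right]
    | succ j =>
      have : ∑ k ∈ range (n + 1), n.choose k * stirlingSecond (k + 1) (j + 1) =
          (j + 1) * stirlingSecond (n + 1) (j + 2) + stirlingSecond (n + 1) (j + 1) := by
        rw [ih (j + 1), ih j, mul_sum, ← sum_add_distrib]
        refine sum_congr rfl fun k _ => ?_
        rw [stirlingSecond_succ_succ]
        ring
      rw [this, stirlingSecond_succ_succ (n + 1) (j + 1)]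
      ring

theorem bell_eq_sum_stirlingSecond (n : ℕ) :
    bell n = ∑ j ∈ range (n + 1), Nat.stirlingSecond n j := by
  rw [bell, stirling2_eq_stirlingSecond]

theorem bell_succ (n : ℕ) : bell (n + 1) = ∑ k ∈ range (n + 1), n.choose k * bell k := by
  simp only [bell_eq_sum_stirlingSecond, sum_range_succ' _ (n + 1),
    Nat.stirlingSecond_succ_zero, add_zero, Nat.stirlingSecond_succ_succ_eq_sum_choose]
  rw [sum_comm]
  refine sum_congr rfl fun k hk => ?_
  rw [← mul_sum]
  congr 1
  refine (sum_subset (range_subset_range.2 (by simpa using hk)) fun j _ hj => ?_).symm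
  exact Nat.stirlingSecond_eq_zero_of_lt (by simp at hj; omega)

theorem X_pow_eq_sum_stirlingSecond_mul_descPochhammer {R : Type*} [CommRing R] (n : ℕ) :
    (X : R[X]) ^ n = ∑ k ∈ range (n + 1), (n.stirlingSecond k : R[X]) * descPochhammer R k := by
  induction n with
  | zero => simp
  | succ n ih =>
    set g : ℕ → R[X] := fun k => (k * n.stirlingSecond k : ℕ) * descPochhammer R k
    have shift : ∑ k ∈ range (n + 1), g k = ∑ k ∈ range (n + 1), g (k + 1) := by
      rw [sum_range_succ', sum_range_succ _ n]
      simp [g, Nat.stirlingSecond_eq_zero_of_lt n.lt_succ_self]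
    calc (X : R[X]) ^ (n + 1)
        = ∑ k ∈ range (n + 1),
            ((n.stirlingSecond k : R[X]) * descPochhammer R (k + 1) + g k) := by
          rw [pow_succ, ih, sum_mul]
          refine sum_congr rfl fun k _ => ?_
          simp only [g, descPochhammer_succ_right]
          push_cast
          ring
      _ = ∑ k ∈ range (n + 1),
            ((n.stirlingSecond k : R[X]) * descPochhammer R (k + 1) + g (k + 1)) := by
          rw [sum_add_distrib, shift, sum_add_distrib]
      _ = _ := by
          rw [sum_range_succ' _ (n + 1), Nat.stirlingSecond_succ_zero, Nat.cast_zero, zero_mul,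
            add_zero]
          refine sum_congr rfl fun k _ => ?_
          simp only [g, Nat.stirlingSecond_succ_succ]
          push_cast
          ring

section BellFunctional

variable (R : Type*) [CommRing R]

noncomputable def bellFunctional : R[X] →ₗ[R] R :=
  lsum fun n => (bell n : R) • LinearMap.id

variable {R}

theorem bellFunctional_monomial (n : ℕ) (a : R) :
    bellFunctional R (monomial n a) = bell n * a := by
  simp [bellFunctional]

theorem bellFunctional_X_pow (n : ℕ) : bellFunctional R (X ^ n) = bell n := by
  rw [← monomial_one_right_eq_X_pow, bellFunctional_monomial, mul_one]

theorem bellFunctional_X_mul (f : R[X]) :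
    bellFunctional R (X * f) = bellFunctional R (f.comp (X + 1)) := by
  induction f using Polynomial.induction_on' with
  | add f g hf hg => rw [mul_add, map_add, hf, hg, add_comp, map_add]
  | monomial n a =>
    rw [X_mul_monomial, bellFunctional_monomial, ← C_mul_X_pow_eq_monomial, mul_comp, C_comp,
      pow_comp, X_comp, ← smul_eq_C_mul, map_smul, add_pow, map_sum, bell_succ]
    simp only [one_pow, mul_one, ← C_eq_natCast, mul_comm _ (C _), ← smul_eq_C_mul, map_smul,
      bellFunctional_X_pow, smul_eq_mul, Nat.cast_sum, Nat.cast_mul, sum_mul, mul_sum]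
    exact sum_congr rfl fun k _ => by ring

theorem bellFunctional_descPochhammer_mul (k : ℕ) (f : R[X]) :
    bellFunctional R (descPochhammer R k * f) = bellFunctional R (f.comp (X + (k : R[X]))) := by
  induction k generalizing f with
  | zero => simp
  | succ k ih =>
    rw [descPochhammer_succ_right, mul_assoc, ih, mul_comp, sub_comp, X_comp, natCast_comp,
      add_sub_cancel_right, bellFunctional_X_mul, comp_assoc, add_comp, X_comp, natCast_comp,
      Nat.cast_succ, add_assoc, add_comm (1 : R[X])]

end BellFunctional

section PrimeField

variable {p : ℕ} [Fact p.Prime]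

theorem descPochhammer_zmod_eq_X_pow_sub_X : descPochhammer (ZMod p) p = X ^ p - X := by
  have hp : 1 < p := (Fact.out : p.Prime).one_lt
  have hmonic : (X ^ p - X : (ZMod p)[X]).Monic :=
    monic_X_pow_sub (by rw [degree_X]; exact_mod_cast hp)
  have hdeg : (X ^ p - X : (ZMod p)[X]).degree = p := by
    rw [degree_eq_natDegree hmonic.ne_zero, FiniteField.X_pow_card_sub_X_natDegree_eq _ hp]
  have hdesc : (descPochhammer (ZMod p) p).degree = p := by
    rw [degree_eq_natDegree (monic_descPochhammer _ p).ne_zero, descPochhammer_natDegree]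
  refine eq_of_degree_sub_lt_of_eval_finset_eq univ ?_ fun c _ => ?_
  · rw [card_univ, ZMod.card, ← hdesc]
    refine degree_sub_lt_left (hdesc.trans hdeg.symm) (monic_descPochhammer _ p).ne_zero ?_
    rw [(monic_descPochhammer _ p).leadingCoeff, hmonic.leadingCoeff]
  · rw [← ZMod.natCast_zmod_val c, descPochhammer_eval_eq_descFactorial,
      Nat.descFactorial_eq_zero_iff_lt.2 (ZMod.val_lt c)]
    simp [ZMod.pow_card]

theorem bellFunctional_X_pow_sub_X : bellFunctional (ZMod p) (X ^ p - X) = 1 := by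
  rw [← descPochhammer_zmod_eq_X_pow_sub_X, ← mul_one (descPochhammer _ _),
    bellFunctional_descPochhammer_mul, one_comp, ← pow_zero X, bellFunctional_X_pow]
  simp [bell, stirling2]

theorem X_sub_C_mul_X_pow_sub_X_divByMonic (a : ZMod p) :
    (X - C a) * ((X ^ p - X) /ₘ (X - C a)) = X ^ p - X :=
  mul_divByMonic_eq_iff_isRoot.2 (by simp [ZMod.pow_card])

theorem X_pow_sub_X_divByMonic_comp_X_add_C (a b : ZMod p) :
    ((X ^ p - X) /ₘ (X - C a)).comp (X + C b) = (X ^ p - X) /ₘ (X - C (a - b)) := by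
  refine mul_left_cancel₀ (X_sub_C_ne_zero (a - b)) ?_
  have h := congrArg (·.comp (X + C b)) (X_sub_C_mul_X_pow_sub_X_divByMonic a)
  simp only [mul_comp, sub_comp, X_comp, C_comp, pow_comp] at h
  rw [X_sub_C_mul_X_pow_sub_X_divByMonic, show X - C (a - b) = X + C b - C a by
    rw [map_sub]; ring, h, add_pow_char, ← C_pow, ZMod.pow_card]
  ring

theorem bellFunctional_X_pow_sub_X_divByMonic_sub_one (a : ZMod p) :
    bellFunctional (ZMod p) ((X ^ p - X) /ₘ (X - C (a - 1))) =
      1 + a * bellFunctional (ZMod p) ((X ^ p - X) /ₘ (X - C a)) := by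
  set q := (X ^ p - X) /ₘ (X - C a)
  have h := X_pow_sub_X_divByMonic_comp_X_add_C a 1
  rw [map_one] at h
  rw [← h, ← bellFunctional_X_mul, show X * q = (X - C a) * q + C a * q by ring, map_add,
    X_sub_C_mul_X_pow_sub_X_divByMonic, bellFunctional_X_pow_sub_X, ← smul_eq_C_mul, map_smul,
    smul_eq_mul]

theorem bellFunctional_X_pow_sub_X_divByMonic_neg_succ (N : ℕ) :
    bellFunctional (ZMod p) ((X ^ p - X) /ₘ (X - C (-((N : ZMod p) + 1)))) =
      (-1) ^ N * numDerangements N := by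
  induction N with
  | zero => simpa using bellFunctional_X_pow_sub_X_divByMonic_sub_one (0 : ZMod p)
  | succ N ih =>
    have hD := congrArg (Int.cast : ℤ → ZMod p) (numDerangements_succ N)
    push_cast at hD
    rw [show -((N + 1 : ℕ) + 1 : ZMod p) = -((N : ZMod p) + 1) - 1 by push_cast; ring,
      bellFunctional_X_pow_sub_X_divByMonic_sub_one, ih, hD]
    have hsq : ((-1 : ZMod p) ^ N) ^ 2 = 1 := by
      rw [← pow_mul, mul_comm, pow_mul, neg_one_sq, one_pow]
    linear_combination -hsq

theorem X_pow_sub_X_divByMonic_eq_sum {a : ZMod p} (ha : a ≠ 0) :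
    (X ^ p - X) /ₘ (X - C a) = ∑ k ∈ Icc 1 (p - 1), C (a ^ (p - 1 - k)) * X ^ k := by
  refine mul_left_cancel₀ (X_sub_C_ne_zero a) ?_
  have hgeom := geom_sum₂_mul (X : (ZMod p)[X]) (C a) (p - 1)
  rw [← C_pow, ZMod.pow_card_sub_one_eq_one ha, map_one] at hgeom
  rw [X_sub_C_mul_X_pow_sub_X_divByMonic]
  calc X ^ p - X = X * ((X ^ (p - 1) - 1)) := by
        rw [mul_sub, ← pow_succ', Nat.sub_add_cancel (Fact.out : p.Prime).one_le, mul_one]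
    _ = (X - C a) * ∑ i ∈ range (p - 1), C (a ^ (p - 1 - (i + 1))) * X ^ (i + 1) := by
        rw [← hgeom, mul_sum, sum_mul, mul_sum]
        refine sum_congr rfl fun i _ => ?_
        rw [show p - 1 - (i + 1) = p - 1 - 1 - i by omega, C_pow]
        ring
    _ = _ := by
        rw [range_eq_Ico, ← Ico_add_one_right_eq_Icc,
          sum_Ico_add' fun k => C (a ^ (p - 1 - k)) * X ^ k]

theorem bellFunctional_X_pow_mul_X_pow_sub_X_divByMonic (n : ℕ) {a : ZMod p} (ha : a ≠ 0) :
    bellFunctional (ZMod p) (X ^ n * ((X ^ p - X) /ₘ (X - C a))) =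
      ∑ k ∈ Icc 1 (p - 1), a ^ (p - 1 - k) * bell (n + k) := by
  rw [X_pow_sub_X_divByMonic_eq_sum ha, mul_sum, map_sum]
  refine sum_congr rfl fun k _ => ?_
  rw [mul_left_comm, ← pow_add, ← smul_eq_C_mul, map_smul, bellFunctional_X_pow, smul_eq_mul]

end PrimeField

theorem sun_zagier_numbers_general (n m p : ℕ) (hp : p.Prime) (hpm : ¬ p ∣ m) :
    (∑ k ∈ Icc 1 (p - 1), (-(m : ℤ)) ^ (p - 1 - k) * bell (n + k)) ≡
      (∑ k ∈ range (n + 1), (stirling2 n k : ℤ) * (-1) ^ (m + k - 1) *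
        (numDerangements (m + k - 1) : ℤ)) [ZMOD p] := by
  have := Fact.mk hp
  have hm : m ≠ 0 := by rintro rfl; exact hpm (dvd_zero p)
  have hmp : -(m : ZMod p) ≠ 0 := neg_ne_zero.2 ((ZMod.natCast_eq_zero_iff m p).not.2 hpm)
  rw [← ZMod.intCast_eq_intCast_iff, stirling2_eq_stirlingSecond]
  push_cast
  set q := (X ^ p - X) /ₘ (X - C (-(m : ZMod p)))
  calc ∑ k ∈ Icc 1 (p - 1), (-(m : ZMod p)) ^ (p - 1 - k) * (bell (n + k) : ZMod p)
      = bellFunctional (ZMod p) (X ^ n * q) :=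
        (bellFunctional_X_pow_mul_X_pow_sub_X_divByMonic n hmp).symm
    _ = ∑ k ∈ range (n + 1),
          n.stirlingSecond k * bellFunctional (ZMod p) (descPochhammer (ZMod p) k * q) := by
        rw [X_pow_eq_sum_stirlingSecond_mul_descPochhammer, sum_mul, map_sum]
        simp only [← nsmul_eq_mul, smul_mul_assoc, map_nsmul]
    _ = _ := by
        refine sum_congr rfl fun k _ => ?_
        have hk : -(m : ZMod p) - k = -(((m + k - 1 : ℕ) : ZMod p) + 1) := by
          rw [Nat.cast_sub (by omega)]
          push_cast
          ring
        rw [bellFunctional_descPochhammer_mul, ← map_natCast C,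
          X_pow_sub_X_divByMonic_comp_X_add_C, hk, bellFunctional_X_pow_sub_X_divByMonic_neg_succ]
        ring

theorem sun_zagier_numbers (n m p : ℕ) (hm : 1 ≤ m) (hp : p.Prime) (hpm : ¬ p ∣ m) :
    (∑ k ∈ Icc 1 (p - 1), (-(m : ℤ)) ^ (p - 1 - k) * bell (n + k)) ≡
      (∑ k ∈ range (n + 1), (stirling2 n k : ℤ) * (-1) ^ (m + k - 1) *
        (numDerangements (m + k - 1) : ℤ)) [ZMOD p] :=
  sun_zagier_numbers_general n m p hp hpm
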